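/- arXiv:2510.21549 — 4 statements merged into one kernel-verified Lean document; each statement's English description precedes it below -/
import Mathlib

section
/- Let G be a graph with neighborhood independence θ (every vertex's neighborhood contains no independent set of size θ+1). Suppose the vertices of G are colored and all monochromatic edges are oriented so that every vertex has at most d out-neighbors of its own color. Then every vertex has at most (2d+1)·θ neighbors of its own color, i.e., the coloring is ((2d+1)·θ)-defective. -/
open Finset

lemma key_ind {V : Type*} [DecidableEq V] (d : ℕ) (r : V → V → Prop) (out : V → V → Prop)
    [DecidableRel r] [DecidableRel out]
    (hsym : ∀ u w, r u w → r w u)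
    (hcov : ∀ u w, r u w → out u w ∨ out w u) :
    ∀ s : Finset V, (∀ u ∈ s, (s.filter (fun w => out u w)).card ≤ d) →
    ∃ t, t ⊆ s ∧ (∀ u ∈ t, ∀ w ∈ t, u ≠ w → ¬ r u w) ∧ s.card ≤ (2*d+1) * t.card := by
  intro s
  induction s using Finset.strongInduction with
  | _ s ih =>
    intro hdeg
    rcases s.eq_empty_or_nonempty with rfl | hne
    · exact ⟨∅, by simp⟩
    · have hsum : ∑ u ∈ s, (s.filter (fun w => r u w)).card ≤ ∑ u ∈ s, 2*d := by
        have h1 : ∀ u ∈ s, (s.filter (fun w => r u w)).card ≤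
            (s.filter (fun w => out u w)).card + (s.filter (fun w => out w u)).card := by
          intro u _
          calc (s.filter (fun w => r u w)).card
              ≤ ((s.filter (fun w => out u w)) ∪ (s.filter (fun w => out w u))).card := by
                apply card_le_card
                intro w hw
                simp only [mem_filter, mem_union] at *
                rcases hcov u w hw.2 with h | h
                · exact Or.inl ⟨hw.1, h⟩
                · exact Or.inr ⟨hw.1, h⟩
            _ ≤ _ := card_union_le _ _
        calc ∑ u ∈ s, (s.filter (fun w => r u w)).card
            ≤ ∑ u ∈ s, ((s.filter (fun w => out u w)).card + (s.filter (fun w => out w u)).card) :=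
              Finset.sum_le_sum h1
          _ = ∑ u ∈ s, (s.filter (fun w => out u w)).card
              + ∑ u ∈ s, (s.filter (fun w => out w u)).card := Finset.sum_add_distrib
          _ = ∑ u ∈ s, (s.filter (fun w => out u w)).card
              + ∑ u ∈ s, (s.filter (fun w => out u w)).card := by
              congr 1
              simp only [Finset.card_filter]
              exact Finset.sum_comm
          _ ≤ ∑ u ∈ s, d + ∑ u ∈ s, d := by
              have := Finset.sum_le_sum hdeg
              omega
          _ = ∑ u ∈ s, 2*d := by rw [← Finset.sum_add_distrib]; apply Finset.sum_congr rfl; intros; ring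
      obtain ⟨u, hu, hud⟩ := Finset.exists_le_of_sum_le hne hsum
      set N := insert u (s.filter (fun w => r u w)) with hN
      have hNcard : N.card ≤ 2*d+1 := le_trans (card_insert_le _ _) (by omega)
      have hNs : N ⊆ s := by
        intro w hw
        rcases mem_insert.mp hw with rfl | hw
        · exact hu
        · exact (mem_filter.mp hw).1
      have hss : s \ N ⊂ s := by
        apply Finset.sdiff_ssubset hNs
        exact ⟨u, mem_insert_self _ _⟩
      obtain ⟨t', ht's, ht'ind, ht'card⟩ := ih (s \ N) hss (fun w hw =>
        le_trans (card_le_card (filter_subset_filter _ sdiff_subset)) (hdeg w (sdiff_subset hw)))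
      have hnotu : ∀ x ∈ t', ¬ r u x := by
        intro x hx hrx
        exact (mem_sdiff.mp (ht's hx)).2
          (mem_insert_of_mem (mem_filter.mpr ⟨sdiff_subset (ht's hx), hrx⟩))
      refine ⟨insert u t', ?_, ?_, ?_⟩
      · intro w hw
        rcases mem_insert.mp hw with rfl | hw
        · exact hu
        · exact sdiff_subset (ht's hw)
      · intro a ha b hb hab h
        rcases mem_insert.mp ha with ha' | ha'
        · rcases mem_insert.mp hb with hb' | hb'
          · exact hab (ha'.trans hb'.symm)
          · exact hnotu b hb' (ha' ▸ h)
        · rcases mem_insert.mp hb with hb' | hb'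
          · exact hnotu a ha' (hb' ▸ hsym _ _ h)
          · exact ht'ind a ha' b hb' hab h
      · have hucard : u ∉ t' := fun h => (mem_sdiff.mp (ht's h)).2 (mem_insert_self _ _)
        rw [card_insert_of_notMem hucard]
        have h2 : (s \ N).card = s.card - N.card := card_sdiff_of_subset hNs
        have h3 : N.card ≤ s.card := card_le_card hNs
        have : s.card ≤ (s \ N).card + (2*d+1) := by omega
        calc s.card ≤ (s \ N).card + (2*d+1) := this
          _ ≤ (2*d+1)*t'.card + (2*d+1) := by omega
          _ = (2*d+1)*(t'.card+1) := by ring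

/-- In a graph of neighborhood independence `θ`, if the vertices are colored and
all monochromatic edges are oriented so that every vertex has at most `d` out-neighbors of its
own color, then every vertex has at most `(2d+1)·θ` neighbors of its own color. -/
theorem arbdefective_implies_defective
    {V : Type*} [Fintype V] [DecidableEq V]
    (G : SimpleGraph V) [DecidableRel G.Adj] (θ d : ℕ)
    (hθ : ∀ v : V, ∀ s : Finset V, (∀ u ∈ s, G.Adj v u) →
      (∀ u ∈ s, ∀ w ∈ s, u ≠ w → ¬ G.Adj u w) → s.card ≤ θ)
    (col : V → ℕ) (out : V → V → Prop) [DecidableRel out]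
    (hout : ∀ u w, out u w → G.Adj u w ∧ col u = col w)
    (horient : ∀ u w, G.Adj u w → col u = col w → out u w ∨ out w u)
    (houtdeg : ∀ u : V, (Finset.univ.filter (fun w => out u w)).card ≤ d) :
    ∀ v : V, (Finset.univ.filter (fun u => G.Adj v u ∧ col u = col v)).card ≤ (2*d+1)*θ := by
  intro v
  set s := Finset.univ.filter (fun u => G.Adj v u ∧ col u = col v) with hs
  have : ∃ t, t ⊆ s ∧ (∀ u ∈ t, ∀ w ∈ t, u ≠ w →
      ¬ (G.Adj u w ∧ col u = col w)) ∧ s.card ≤ (2*d+1) * t.card := by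
    apply key_ind d (fun u w => G.Adj u w ∧ col u = col w) out
    · intro u w ⟨h1, h2⟩; exact ⟨h1.symm, h2.symm⟩
    · intro u w ⟨h1, h2⟩; exact horient u w h1 h2
    · intro u _
      exact le_trans (card_le_card (filter_subset_filter _ (subset_univ s))) (houtdeg u)
  obtain ⟨t, hts, htind, htcard⟩ := this
  have hmem : ∀ u ∈ t, G.Adj v u ∧ col u = col v := by
    intro u hu
    have := hts hu
    rw [hs, mem_filter] at this
    exact this.2
  have hθt : t.card ≤ θ := by
    apply hθ v t (fun u hu => (hmem u hu).1)
    intro a ha b hb hab hadj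
    exact htind a ha b hb hab ⟨hadj, (hmem a ha).2.trans (hmem b hb).2.symm⟩
  calc s.card ≤ (2*d+1) * t.card := htcard
    _ ≤ (2*d+1) * θ := Nat.mul_le_mul_left _ hθt
end

section
/- Let v have list L_v and defects d_v with ∑_{x∈L_v}(d_v(x)+1) > 2·deg(v), and suppose at most deg(v) neighbors of v are already colored, with α_v(x) neighbors colored with color x (∑_x α_v(x) ≤ deg(v)). Let L'_v := {x : α_v(x) ≤ d_v(x)} and d'_v(x) := d_v(x) − α_v(x). If moreover v's degree within the currently active subgraph is at most deg(v)/S for some S ≥ 1, then ∑_{x∈L'_v}(d'_v(x)+1) > deg(v) ≥ S·(degree of v in the active subgraph), i.e., the residual instance has slack at least S. -/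
open Finset

/-- slack amplification (Lemma 2.2, Case (2)): starting from slack 2, after at
most `deg(v)` neighbors are colored, the residual instance restricted to an active subgraph of
degree at most `deg(v)/S` has slack at least `S`. -/
theorem slack_amplification
    {α : Type*} [DecidableEq α] (L : Finset α) (dv a : α → ℕ) (deg degActive : ℕ)
    (S : ℝ) (hS : 1 ≤ S)
    (hslack : 2 * (deg : ℝ) < ∑ x ∈ L, ((dv x : ℝ) + 1))
    (ha : ∑ x ∈ L, (a x : ℝ) ≤ (deg : ℝ))
    (hActive : (degActive : ℝ) ≤ (deg : ℝ) / S) :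
    (deg : ℝ) < ∑ x ∈ L.filter (fun x => a x ≤ dv x), (((dv x : ℝ) - (a x : ℝ)) + 1) ∧
    S * (degActive : ℝ) ≤ (deg : ℝ) := by
  have hS0 : (0:ℝ) < S := lt_of_lt_of_le one_pos hS
  constructor
  · have key : ∑ x ∈ L, ((dv x : ℝ) + 1 - (a x : ℝ)) ≤
        ∑ x ∈ L.filter (fun x => a x ≤ dv x), (((dv x : ℝ) - (a x : ℝ)) + 1) := by
      rw [← Finset.sum_filter_add_sum_filter_not L (fun x => a x ≤ dv x)
        (fun x => (dv x : ℝ) + 1 - (a x : ℝ))]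
      have h1 : ∑ x ∈ L.filter (fun x => ¬ a x ≤ dv x),
          ((dv x : ℝ) + 1 - (a x : ℝ)) ≤ 0 := by
        apply Finset.sum_nonpos
        intro x hx
        have := (Finset.mem_filter.mp hx).2
        have : dv x < a x := Nat.lt_of_not_le this
        have : (dv x : ℝ) + 1 ≤ (a x : ℝ) := by exact_mod_cast this
        linarith
      have h2 : ∑ x ∈ L.filter (fun x => a x ≤ dv x), ((dv x : ℝ) + 1 - (a x : ℝ)) =
          ∑ x ∈ L.filter (fun x => a x ≤ dv x), (((dv x : ℝ) - (a x : ℝ)) + 1) := by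
        apply Finset.sum_congr rfl; intro x _; ring
      linarith
    have : ∑ x ∈ L, ((dv x : ℝ) + 1 - (a x : ℝ)) =
        (∑ x ∈ L, ((dv x : ℝ) + 1)) - ∑ x ∈ L, (a x : ℝ) := by
      rw [Finset.sum_sub_distrib]
    linarith
  · calc S * (degActive : ℝ) ≤ S * ((deg : ℝ) / S) := by
          exact mul_le_mul_of_nonneg_left hActive hS0.le
      _ = (deg : ℝ) := by field_simp
end

section
/- Let v have list L_v and defects d_v with ∑_{x∈L_v}(d_v(x)+1) > deg(v) (slack 1). Suppose at most deg(v)/2 neighbors of v are colored so far, with α_v(x) of them colored x. With L'_v := {x : α_v(x) ≤ d_v(x)} and d'_v(x) := d_v(x) − α_v(x), we have ∑_{x∈L'_v}(d'_v(x)+1) > deg(v)/2. Consequently, if v's degree in the active subgraph is at most deg(v)/4, the residual instance has slack at least 2. -/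
open Finset

/-- (Lemma 2.2, Case (1)): from slack 1, if at most `deg(v)/2` neighbors are
colored, the residual sum exceeds `deg(v)/2`; hence if the active degree is at most `deg(v)/4`,
the residual instance has slack at least 2. -/
theorem residual_slack_two
    {α : Type*} [DecidableEq α] (L : Finset α) (dv a : α → ℕ) (deg degActive : ℕ)
    (hslack : (deg : ℝ) < ∑ x ∈ L, ((dv x : ℝ) + 1))
    (ha : ∑ x ∈ L, (a x : ℝ) ≤ (deg : ℝ) / 2) :
    (deg : ℝ) / 2 < ∑ x ∈ L.filter (fun x => a x ≤ dv x), (((dv x : ℝ) - (a x : ℝ)) + 1) ∧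
    ((degActive : ℝ) ≤ (deg : ℝ) / 4 →
      2 * (degActive : ℝ) <
        ∑ x ∈ L.filter (fun x => a x ≤ dv x), (((dv x : ℝ) - (a x : ℝ)) + 1)) := by
  have key : (deg : ℝ) / 2 <
      ∑ x ∈ L.filter (fun x => a x ≤ dv x), (((dv x : ℝ) - (a x : ℝ)) + 1) := by
    have hsplit := Finset.sum_filter_add_sum_filter_not L (fun x => a x ≤ dv x)
      (fun x => ((dv x : ℝ) - (a x : ℝ)) + 1)
    have hneg : ∑ x ∈ L.filter (fun x => ¬ a x ≤ dv x),
        (((dv x : ℝ) - (a x : ℝ)) + 1) ≤ 0 := by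
      apply Finset.sum_nonpos
      intro x hx
      have h := (Finset.mem_filter.mp hx).2
      have : dv x + 1 ≤ a x := Nat.succ_le_of_lt (Nat.lt_of_not_le h)
      have : ((dv x : ℝ)) + 1 ≤ (a x : ℝ) := by exact_mod_cast this
      linarith
    have hall : ∑ x ∈ L, (((dv x : ℝ) - (a x : ℝ)) + 1) =
        ∑ x ∈ L, ((dv x : ℝ) + 1) - ∑ x ∈ L, (a x : ℝ) := by
      rw [← Finset.sum_sub_distrib]; apply Finset.sum_congr rfl; intros; ring
    nlinarith [hsplit, hneg]
  exact ⟨key, fun h => by linarith⟩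
end

section
/- In a rooted tree where the root and all internal vertices at even distance from the root have exactly r ≥ 3 children, vertices at odd distance have exactly d−1 ≥ 2 children, every 'hyperedge-vertex' (a vertex at even distance from the root) has exactly r(d−1) hyperedge-vertices at distance 2, of which at most d−1 are at distance ≤ its own distance from the root; hence if each hyperedge-vertex is 2-colored so that at least d of its distance-2 hyperedge-vertices have the opposite color, then every hyperedge-vertex at even depth 4ℓ with the root's color has a hyperedge-vertex at depth 4(ℓ+1) with the root's color, provided the tree is complete up to depth 4(ℓ+1). -/
/-! The distance-2 vertices of a hyperedge-vertex `p = m ++ [a]` are its grandchildren, its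
`d - 2` siblings `m ++ [b]` and its grandparent, so at most `d - 1` of them are not
grandchildren. Hence `d` opposite-coloured distance-2 vertices force an opposite-coloured
grandchild. Flipping the colour twice, every vertex at depth `4ℓ` with the root's colour has a
descendant at depth `4ℓ + 4` with the root's colour. -/

/-- Valid nodes of the infinite rooted tree in which vertices at even distance from the root
have `r` children and vertices at odd distance have `d - 1` children; a node is encoded by the
list of child indices on the path from the root. -/
def treeValid (r d : ℕ) (p : List ℕ) : Prop :=
  ∀ i (h : i < p.length), p.get ⟨i, h⟩ < if i % 2 = 0 then r else d - 1

/-- The (undirected) tree on the valid nodes, with parent/child adjacency. -/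
def treeGraph (r d : ℕ) : SimpleGraph (List ℕ) where
  Adj p q := (treeValid r d p ∧ treeValid r d q) ∧
    ((∃ a, q = p ++ [a]) ∨ (∃ a, p = q ++ [a]))
  symm := by
    constructor
    intro p q h
    exact ⟨⟨h.1.2, h.1.1⟩, h.2.symm⟩
  loopless := by
    constructor
    intro p h
    rcases h.2 with ⟨a, ha⟩ | ⟨a, ha⟩ <;>
      · have := congrArg List.length ha
        simp at this

theorem treeGraph_dist_eq_two {r d : ℕ} {p q : List ℕ} (h : (treeGraph r d).dist p q = 2) :
    (∃ a b, q = p ++ [a, b]) ∨ (∃ m a b, p = m ++ [a] ∧ q = m ++ [b] ∧ a ≠ b) ∨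
      ∃ a b, p = q ++ [a, b] := by
  have hedist : (treeGraph r d).edist p q = 2 := by
    rw [← (SimpleGraph.Reachable.of_dist_ne_zero (by omega)).coe_dist_eq_edist, h]; rfl
  obtain ⟨hpq, -, x, hx⟩ := SimpleGraph.edist_eq_two_iff.mp hedist
  obtain ⟨⟨-, hpx⟩, ⟨-, hqx⟩⟩ := (treeGraph r d).mem_commonNeighbors.mp hx
  rcases hpx with ⟨a, rfl⟩ | ⟨a, rfl⟩ <;> rcases hqx with ⟨b, hb⟩ | ⟨b, rfl⟩
  · exact absurd (List.append_inj' hb rfl).1 hpq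
  · exact Or.inl ⟨a, b, by simp⟩
  · exact Or.inr (Or.inr ⟨b, a, by simp [hb]⟩)
  · refine Or.inr (Or.inl ⟨x, a, b, rfl, rfl, ?_⟩)
    rintro rfl; exact hpq rfl

theorem treeValid.last_lt {r d : ℕ} {m : List ℕ} {b : ℕ} (h : treeValid r d (m ++ [b])) :
    b < if m.length % 2 = 0 then r else d - 1 := by
  simpa using h m.length (by simp)

theorem encard_dist_eq_two_not_grandchild_le {r d : ℕ} {p : List ℕ} (hp : treeValid r d p)
    (hev : Even p.length) :
    {q | treeValid r d q ∧ (treeGraph r d).dist p q = 2 ∧ ¬ ∃ a b, q = p ++ [a, b]}.encard ≤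
      (d - 1 : ℕ) := by
  rcases List.eq_nil_or_concat' p with rfl | ⟨m, a, rfl⟩
  · refine le_of_eq_of_le (Set.encard_eq_zero.mpr ?_) bot_le
    refine Set.eq_empty_of_forall_notMem fun q ⟨_, hdist, hgc⟩ => ?_
    rcases treeGraph_dist_eq_two hdist with hgc' | ⟨m, a, b, hm, -⟩ | ⟨a, b, hq⟩
    · exact hgc hgc'
    · simp at hm
    · simp at hq
  · have hodd : m.length % 2 = 1 := by
      rw [List.length_append, List.length_singleton, Nat.even_add_one, Nat.even_iff] at hev
      omega
    have ha : a < d - 1 := by simpa [hodd] using hp.last_lt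
    set siblings := ((Finset.range (d - 1)).erase a).image (fun b => m ++ [b])
    calc _ ≤ ((insert m.dropLast siblings : Finset (List ℕ)) : Set (List ℕ)).encard := by
          refine Set.encard_le_encard fun q ⟨hq, hdist, hgc⟩ => ?_
          rcases treeGraph_dist_eq_two hdist with hgc' | ⟨m', a', b, hm, rfl, hab⟩ | ⟨a', b, hq'⟩
          · exact absurd hgc' hgc
          · obtain ⟨rfl, rfl⟩ : m' = m ∧ a' = a := by simpa [eq_comm] using hm
            have hb : b < d - 1 := by simpa [hodd] using hq.last_lt
            simp [siblings, hb, Ne.symm hab]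
          · have hq' : m ++ [a] = (q ++ [a']) ++ [b] := by simpa using hq'
            obtain ⟨rfl, -⟩ := List.append_inj' hq' rfl
            simp
      _ ≤ (d - 1 : ℕ) := by
          rw [Set.encard_coe_eq_coe_finsetCard, Nat.cast_le]
          calc _ ≤ siblings.card + 1 := Finset.card_insert_le _ _
            _ ≤ ((Finset.range (d - 1)).erase a).card + 1 := by gcongr; exact Finset.card_image_le
            _ = d - 1 := by
              rw [Finset.card_erase_of_mem (by simpa using ha), Finset.card_range]; omega

theorem exists_grandchild_col_ne {r d : ℕ} (hd : 0 < d) {col : List ℕ → Bool} {p : List ℕ}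
    (hp : treeValid r d p) (hev : Even p.length)
    (hopp : d ≤ Set.ncard {q : List ℕ | treeValid r d q ∧ Even q.length ∧
        (treeGraph r d).dist p q = 2 ∧ col q ≠ col p}) :
    ∃ a b, treeValid r d (p ++ [a, b]) ∧ col (p ++ [a, b]) ≠ col p := by
  by_contra! hno
  have hsub : {q : List ℕ | treeValid r d q ∧ Even q.length ∧
        (treeGraph r d).dist p q = 2 ∧ col q ≠ col p} ⊆
      {q | treeValid r d q ∧ (treeGraph r d).dist p q = 2 ∧ ¬ ∃ a b, q = p ++ [a, b]} := by
    rintro q ⟨hq, -, hdist, hcol⟩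
    exact ⟨hq, hdist, by rintro ⟨a, b, rfl⟩; exact hcol (hno a b hq)⟩
  have hle := ENat.natCast_le_natCast.mp <| (Set.ncard_le_encard _).trans <|
    (Set.encard_le_encard hsub).trans (encard_dist_eq_two_not_grandchild_le hp hev)
  omega

theorem tree_color_propagation_general (r d : ℕ) (hd : 3 ≤ d)
    (col : List ℕ → Bool) (N : ℕ)
    (hopp : ∀ p : List ℕ, treeValid r d p → Even p.length → p.length + 2 ≤ N →
      d ≤ Set.ncard {q : List ℕ | treeValid r d q ∧ Even q.length ∧
        (treeGraph r d).dist p q = 2 ∧ col q ≠ col p}) :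
    ∀ ℓ : ℕ, ∀ p : List ℕ, treeValid r d p → p.length = 4 * ℓ → col p = col [] →
      4 * (ℓ + 1) ≤ N →
      ∃ q : List ℕ, treeValid r d q ∧ q.length = 4 * (ℓ + 1) ∧ p <+: q ∧ col q = col [] := by
  intro ℓ p hp hlen hcol hN
  have hev : Even p.length := ⟨2 * ℓ, by omega⟩
  obtain ⟨a, b, hv₁, hc₁⟩ := exists_grandchild_col_ne (by omega) hp hev (hopp p hp hev (by omega))
  have hev₁ : Even (p ++ [a, b]).length := ⟨2 * ℓ + 1, by simp; omega⟩
  obtain ⟨c, e, hv₂, hc₂⟩ :=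
    exists_grandchild_col_ne (by omega) hv₁ hev₁ (hopp _ hv₁ hev₁ (by simp; omega))
  refine ⟨p ++ [a, b] ++ [c, e], hv₂, by simp; omega, ⟨[a, b, c, e], by simp⟩, ?_⟩
  rw [← hcol, Bool.eq_not_of_ne hc₂, Bool.eq_not_of_ne hc₁, Bool.not_not]

/-- In the `(r, d)`-biregular incidence tree (hyperedge-vertices at even depth),
if every hyperedge-vertex (up to the completeness depth `N`) has at least `d` opposite-colored
hyperedge-vertices at distance 2, then every hyperedge-vertex at depth `4ℓ` carrying the root's
color has a hyperedge-vertex at depth `4(ℓ+1)` (below it) with the root's color, provided the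
tree is complete up to depth `4(ℓ+1)`. -/
theorem tree_color_propagation (r d : ℕ) (hr : 3 ≤ r) (hd : 3 ≤ d)
    (col : List ℕ → Bool) (N : ℕ)
    (hopp : ∀ p : List ℕ, treeValid r d p → Even p.length → p.length + 2 ≤ N →
      d ≤ Set.ncard {q : List ℕ | treeValid r d q ∧ Even q.length ∧
        (treeGraph r d).dist p q = 2 ∧ col q ≠ col p}) :
    ∀ ℓ : ℕ, ∀ p : List ℕ, treeValid r d p → p.length = 4 * ℓ → col p = col [] →
      4 * (ℓ + 1) ≤ N →
      ∃ q : List ℕ, treeValid r d q ∧ q.length = 4 * (ℓ + 1) ∧ p <+: q ∧ col q = col [] :=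
  tree_color_propagation_general r d hd col N hopp
end
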